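/- In the Grassmann algebra Λ[ξ₁, ξ₂] ⊗ ℂ[v₁,…,v₄,w₁,…,w₄], the elements y_{ij} = v_i w_j − v_j w_i, θ_i = v_i ξ₂ − w_i ξ₁, and a = ξ₁ξ₂ satisfy the super Plücker relations: y_{12}y_{34} − y_{13}y_{24} + y_{14}y_{23} = 0; y_{ij}θ_k − y_{ik}θ_j + y_{jk}θ_i = 0 for i<j<k; θ_iθ_j = a y_{ij}; and θ_i a = 0. -/
import Mathlib


/-- In the superalgebra `ℂ[v,w] ⊗ Λ[ξ₁,ξ₂]` (modeled as a ring with even central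
generators `v_i, w_i` and odd generators `ξ₁, ξ₂`), the elements
`y_{ij} = v_i w_j − v_j w_i`, `θ_i = v_i ξ₂ − w_i ξ₁`, `a = ξ₁ξ₂` satisfy the
super Plücker relations. -/
theorem stmt6 {A : Type*} [Ring A] [Algebra ℂ A]
    (v w : Fin 4 → A) (ξ₁ ξ₂ : A)
    (hv : ∀ i (x : A), Commute (v i) x) (hw : ∀ i (x : A), Commute (w i) x)
    (hξ₁ : ξ₁ * ξ₁ = 0) (hξ₂ : ξ₂ * ξ₂ = 0) (hξ : ξ₁ * ξ₂ = -(ξ₂ * ξ₁))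
    (y : Fin 4 → Fin 4 → A) (θ : Fin 4 → A) (a : A)
    (hy : ∀ i j, y i j = v i * w j - v j * w i)
    (hθ : ∀ i, θ i = v i * ξ₂ - w i * ξ₁)
    (ha : a = ξ₁ * ξ₂) :
    (y 0 1 * y 2 3 - y 0 2 * y 1 3 + y 0 3 * y 1 2 = 0) ∧
    (∀ i j k : Fin 4, i < j → j < k →
      y i j * θ k - y i k * θ j + y j k * θ i = 0) ∧
    (∀ i j : Fin 4, i < j → θ i * θ j = a * y i j) ∧
    (∀ i : Fin 4, θ i * a = 0) := by
  have hξ' : ξ₂ * ξ₁ = -(ξ₁ * ξ₂) := by rw [hξ, neg_neg]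
  have hvc : ∀ i, v i ∈ Subring.center A :=
    fun i => Subring.mem_center_iff.mpr fun g => (hv i g).symm.eq
  have hwc : ∀ i, w i ∈ Subring.center A :=
    fun i => Subring.mem_center_iff.mpr fun g => (hw i g).symm.eq
  set C := Subring.center A with hC
  let V : Fin 4 → C := fun i => ⟨v i, hvc i⟩
  let W : Fin 4 → C := fun i => ⟨w i, hwc i⟩
  have keyv : ∀ i j k : Fin 4, y i j * v k - y i k * v j + y j k * v i = 0 := by
    intro i j k
    have hid : ((V i * W j - V j * W i) * V k - (V i * W k - V k * W i) * V j
        + (V j * W k - V k * W j) * V i : C) = 0 := by ring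
    have := congrArg (Subtype.val) hid
    push_cast [V, W] at this
    simpa [hy] using this
  have keyw : ∀ i j k : Fin 4, y i j * w k - y i k * w j + y j k * w i = 0 := by
    intro i j k
    have hid : ((V i * W j - V j * W i) * W k - (V i * W k - V k * W i) * W j
        + (V j * W k - V k * W j) * W i : C) = 0 := by ring
    have := congrArg (Subtype.val) hid
    push_cast [V, W] at this
    simpa [hy] using this
  have mul4 : ∀ (c d x z : A), (∀ t : A, Commute c t) → (∀ t : A, Commute d t) →
      (c * x) * (d * z) = c * d * (x * z) := by
    intro c d x z hc hd
    rw [mul_assoc c x, ← mul_assoc x d, (hd x).symm.eq, mul_assoc d x, ← mul_assoc c d]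
  refine ⟨?_, ?_, ?_, ?_⟩
  · have hid : ((V 0 * W 1 - V 1 * W 0) * (V 2 * W 3 - V 3 * W 2)
        - (V 0 * W 2 - V 2 * W 0) * (V 1 * W 3 - V 3 * W 1)
        + (V 0 * W 3 - V 3 * W 0) * (V 1 * W 2 - V 2 * W 1) : C) = 0 := by ring
    have := congrArg (Subtype.val) hid
    push_cast [V, W] at this
    simpa [hy] using this
  · intro i j k _ _
    have e : y i j * θ k - y i k * θ j + y j k * θ i
        = (y i j * v k - y i k * v j + y j k * v i) * ξ₂
          - (y i j * w k - y i k * w j + y j k * w i) * ξ₁ := by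
      rw [hθ i, hθ j, hθ k]; noncomm_ring
    rw [e, keyv i j k, keyw i j k, zero_mul, zero_mul, sub_zero]
  · intro i j _
    have e : θ i * θ j = (v i * ξ₂) * (v j * ξ₂) - (v i * ξ₂) * (w j * ξ₁)
        - ((w i * ξ₁) * (v j * ξ₂) - (w i * ξ₁) * (w j * ξ₁)) := by
      rw [hθ i, hθ j]; noncomm_ring
    rw [e, mul4 _ _ _ _ (hv i) (hv j), mul4 _ _ _ _ (hv i) (hw j),
      mul4 _ _ _ _ (hw i) (hv j), mul4 _ _ _ _ (hw i) (hw j),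
      hξ₂, hξ₁, hξ', mul_zero, mul_zero, ha]
    have hc : w i * v j = v j * w i := (hw i (v j)).eq
    have hyc : Commute (y i j) (ξ₁ * ξ₂) := by
      rw [hy]
      exact ((hv i _).mul_left (hw j _)).sub_left ((hv j _).mul_left (hw i _))
    rw [hy i j]
    calc 0 - v i * w j * -(ξ₁ * ξ₂) - (w i * v j * (ξ₁ * ξ₂) - 0)
        = (v i * w j - w i * v j) * (ξ₁ * ξ₂) := by noncomm_ring
      _ = (v i * w j - v j * w i) * (ξ₁ * ξ₂) := by rw [hc]
      _ = ξ₁ * ξ₂ * (v i * w j - v j * w i) := by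
          rw [← hy i j, hyc.symm.eq, hy i j]
  · intro i
    rw [hθ i, ha, sub_mul, mul_assoc, mul_assoc]
    have e1 : ξ₂ * (ξ₁ * ξ₂) = 0 := by
      rw [← mul_assoc, hξ', neg_mul, mul_assoc, hξ₂, mul_zero, neg_zero]
    have e2 : ξ₁ * (ξ₁ * ξ₂) = 0 := by rw [← mul_assoc, hξ₁, zero_mul]
    rw [e1, e2, mul_zero, mul_zero, sub_zero]
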